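/- Let n ≥ 2 and let λ₁,…,λ_g ∈ F_n satisfy ∏_{i=1}^g [y_i, λ_i] ∈ F_{n+2}. Define the endomorphism h of F by h(x_i) = x_i·λ_i and h(y_i) = λ_i⁻¹·y_i·λ_i for 1 ≤ i ≤ g. Then ∏_{i=1}^g [h(x_i), h(y_i)] ≡ ω_g modulo F_{n+2}; consequently h induces an automorphism of F/F_{n+1} which belongs to A₀(F/F_{n+1}) and which induces the identity automorphism of F/F_n. -/

import Mathlib

/-!
`Fg g` is the free group `F` on `2g` generators `x₁,…,x_g,y₁,…,y_g`
(`X g i = x_i`, `Y g i = y_i`), `omegaG g = [x₁,y₁]⋯[x_g,y_g]`.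
Paper convention: `F_k = (⊤ : Subgroup (Fg g)).lowerCentralSeries (k-1)`, and
`Q g k = F/F_k`.  `IsA0 g k φ` says that the automorphism `φ` of `F/F_k`
lies in `A₀(F/F_k)`: some endomorphism of `F` lifting `φ` sends `ω_g`
into `ω_g·F_{k+1}`.
-/

open scoped commutatorElement

abbrev Fg (g : ℕ) := FreeGroup (Fin g × Bool)

def X (g : ℕ) (i : Fin g) : Fg g := FreeGroup.of (i, false)

def Y (g : ℕ) (i : Fin g) : Fg g := FreeGroup.of (i, true)

def omegaG (g : ℕ) : Fg g := ((List.finRange g).map fun i => ⁅X g i, Y g i⁆).prod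

/-- `F/F_k` in the paper's indexing of the lower central series. -/
abbrev Q (g k : ℕ) := Fg g ⧸ (⊤ : Subgroup (Fg g)).lowerCentralSeries (k - 1)

def mkQ (g k : ℕ) : Fg g →* Q g k := QuotientGroup.mk' _

/-- Membership in `A₀(F/F_k)`. -/
def IsA0 (g k : ℕ) (φ : MulAut (Q g k)) : Prop :=
  ∃ h : Fg g →* Fg g,
    (∀ a : Fg g, mkQ g k (h a) = φ (mkQ g k a)) ∧
    (omegaG g)⁻¹ * h (omegaG g) ∈ (⊤ : Subgroup (Fg g)).lowerCentralSeries k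

/-- The natural projection `F/F_{k+1} → F/F_k`. -/
def projQ (g k : ℕ) : Q g (k + 1) →* Q g k :=
  QuotientGroup.map _ _ (MonoidHom.id _)
    (fun x hx => Subgroup.lowerCentralSeries_antitone (S := ⊤) (Nat.sub_le k 1) hx)

/-!
Modulo `F_{n+2}` every `[y_i, λ_i]` is central, and
`[x_i λ_i, λ_i⁻¹ y_i λ_i] [y_i, λ_i] = [x_i, y_i] [[λ_i, y_i], λ_i⁻¹]⁻¹ ≡ [x_i, y_i]`;
multiplying over `i` gives `h(ω_g) ≡ ω_g (∏ [y_i, λ_i])⁻¹ ≡ ω_g`.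

On generators `h ≡ id` modulo `F_n`, hence on all of `F`. By the three subgroup lemma an
endomorphism that is the identity modulo `F_b` moves elements of `F_a` only modulo
`F_{a+b-1}`; so the displacement `d(a) = a⁻¹ h(a) ∈ F_n` satisfies `h(d(a)) ≡ d(a)` modulo
`F_{2n-1} ⊆ F_{n+1}`. An endomorphism `φ` of a group fixing all its
displacements is bijective, with inverse `q ↦ q (q⁻¹ φ(q))⁻¹`.
-/

open Subgroup

section LowerCentralSeries

variable {G : Type*} [Group G]

theorem Subgroup.commutator_commutator_le_of_rotate {H₁ H₂ H₃ N : Subgroup G} [N.Normal]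
    (h1 : ⁅⁅H₂, H₃⁆, H₁⁆ ≤ N) (h2 : ⁅⁅H₃, H₁⁆, H₂⁆ ≤ N) : ⁅⁅H₁, H₂⁆, H₃⁆ ≤ N := by
  simp only [← QuotientGroup.ker_mk' N, ← map_eq_bot_iff, map_commutator] at h1 h2 ⊢
  exact commutator_commutator_eq_bot_of_rotate h1 h2

theorem Subgroup.commutator_lowerCentralSeries_le (a b : ℕ) :
    ⁅(⊤ : Subgroup G).lowerCentralSeries a, (⊤ : Subgroup G).lowerCentralSeries b⁆ ≤
      (⊤ : Subgroup G).lowerCentralSeries (a + b + 1) := by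
  induction b generalizing a with
  | zero => rfl
  | succ b ih =>
    rw [lowerCentralSeries_succ, commutator_comm]
    apply commutator_commutator_le_of_rotate
    · rw [commutator_comm ⊤, ← lowerCentralSeries_succ]
      exact (ih (a + 1)).trans (lowerCentralSeries_antitone _ (by omega))
    · exact (commutator_mono (ih a) le_rfl).trans
        (lowerCentralSeries_antitone _ (by omega : a + (b + 1) + 1 ≤ a + b + 1 + 1))

theorem Subgroup.lowerCentralSeries_le_comap {H : Type*} [Group H] (f : G →* H) (k : ℕ) :
    (⊤ : Subgroup G).lowerCentralSeries k ≤ ((⊤ : Subgroup H).lowerCentralSeries k).comap f := by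
  rw [← map_le_iff_le_comap, map_lowerCentralSeries]
  exact lowerCentralSeries_mono k le_top

theorem QuotientGroup.commute_mk_of_commutatorElement_mem {N : Subgroup G} [N.Normal] {a b : G}
    (h : ⁅a, b⁆ ∈ N) : Commute (a : G ⧸ N) b :=
  commutatorElement_eq_one_iff_commute.mp ((QuotientGroup.eq_one_iff _).mpr h)

theorem QuotientGroup.commute_mk_of_mem_lowerCentralSeries {m : ℕ} {u : G}
    (hu : u ∈ (⊤ : Subgroup G).lowerCentralSeries m)
    (x : G ⧸ (⊤ : Subgroup G).lowerCentralSeries (m + 1)) : Commute (u : G ⧸ _) x := by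
  induction x using QuotientGroup.induction_on with
  | H a => exact commute_mk_of_commutatorElement_mem (commutator_mem_commutator hu (mem_top a))

theorem commutatorElement_mul_mul_of_commute {a b z v : G} (hz : Commute z (b * v))
    (hv : Commute a v) : ⁅a * z, b * v⁆ = ⁅a, b⁆ :=
  calc ⁅a * z, b * v⁆ = a * (b * v) * a⁻¹ * (b * v)⁻¹ := by
        rw [commutatorElement_def, mul_assoc a, hz.eq]; group
    _ = a * b * (v * a⁻¹) * v⁻¹ * b⁻¹ := by group
    _ = ⁅a, b⁆ := by rw [← hv.inv_left.eq, commutatorElement_def]; group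

theorem List.prod_map_mul_of_commute {M ι : Type*} [Monoid M] (l : List ι) (f c : ι → M)
    (hc : ∀ i x, Commute (c i) x) :
    (l.map fun i => f i * c i).prod = (l.map f).prod * (l.map c).prod := by
  induction l with
  | nil => simp
  | cons i l ih => simp only [List.map_cons, List.prod_cons, ih, mul_assoc, (hc i _).left_comm]

theorem inv_mul_map_mem_lowerCentralSeries_add (f : G →* G) {c : ℕ}
    (hf : ∀ a, a⁻¹ * f a ∈ (⊤ : Subgroup G).lowerCentralSeries c) (k : ℕ) {u : G}
    (hu : u ∈ (⊤ : Subgroup G).lowerCentralSeries k) :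
    u⁻¹ * f u ∈ (⊤ : Subgroup G).lowerCentralSeries (k + c) := by
  induction k generalizing u with
  | zero => simpa using hf u
  | succ k ih =>
    set N := (⊤ : Subgroup G).lowerCentralSeries (k + c + 1)
    suffices (⊤ : Subgroup G).lowerCentralSeries (k + 1) ≤
        ((QuotientGroup.mk' N).comp f).eqLocus (QuotientGroup.mk' N) by
      rw [Nat.add_right_comm]
      exact QuotientGroup.eq.mp (this hu).symm
    rw [Subgroup.lowerCentralSeries_succ, commutator_le]
    intro p hp q _
    obtain ⟨p', hp', hfp⟩ : ∃ p' ∈ (⊤ : Subgroup G).lowerCentralSeries (k + c), f p = p * p' :=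
      ⟨_, ih hp, (mul_inv_cancel_left p (f p)).symm⟩
    obtain ⟨q', hq', hfq⟩ : ∃ q' ∈ (⊤ : Subgroup G).lowerCentralSeries c, f q = q * q' :=
      ⟨_, hf q, (mul_inv_cancel_left q (f q)).symm⟩
    have hpq' : ⁅p, q'⁆ ∈ N :=
      commutator_lowerCentralSeries_le k c (commutator_mem_commutator hp hq')
    change QuotientGroup.mk' N (f ⁅p, q⁆) = QuotientGroup.mk' N ⁅p, q⁆
    rw [map_commutatorElement f, hfp, hfq, map_commutatorElement, map_mul, map_mul,
      map_commutatorElement]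
    exact commutatorElement_mul_mul_of_commute
      (QuotientGroup.commute_mk_of_mem_lowerCentralSeries hp' _)
      (QuotientGroup.commute_mk_of_commutatorElement_mem hpq')

theorem MonoidHom.bijective_of_map_inv_mul_apply_eq {Q : Type*} [Group Q] (φ : Q →* Q)
    (hφ : ∀ q, φ (q⁻¹ * φ q) = q⁻¹ * φ q) : Function.Bijective φ := by
  have hright : ∀ q, φ (q * (q⁻¹ * φ q)⁻¹) = q := fun q => by
    rw [map_mul, map_inv, hφ]; group
  refine Function.bijective_iff_has_inverse.mpr ⟨fun q => q * (q⁻¹ * φ q)⁻¹, fun q => ?_, hright⟩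
  have hφφ : φ (φ q) = φ q * (q⁻¹ * φ q) := by
    conv_lhs => rw [← mul_inv_cancel_left q (φ q), map_mul, hφ]
  change φ q * ((φ q)⁻¹ * φ (φ q))⁻¹ = q
  rw [hφφ]
  group

theorem bijective_map_lowerCentralSeries_of_inv_mul_mem (f : G →* G) {c m : ℕ}
    (hf : ∀ a, a⁻¹ * f a ∈ (⊤ : Subgroup G).lowerCentralSeries c) (hm : m ≤ c + c) :
    Function.Bijective (QuotientGroup.map _ _ f (lowerCentralSeries_le_comap f m)) := by
  refine MonoidHom.bijective_of_map_inv_mul_apply_eq _ fun q => ?_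
  induction q using QuotientGroup.induction_on with
  | H a =>
    simp only [← QuotientGroup.mk_inv, ← QuotientGroup.mk_mul, QuotientGroup.map_mk]
    exact (QuotientGroup.eq.mpr <| Subgroup.lowerCentralSeries_antitone _ hm <|
      inv_mul_map_mem_lowerCentralSeries_add f hf c (hf a)).symm

theorem inv_mul_prod_commutator_conj_mem_lowerCentralSeries {ι : Type*} (l : List ι)
    (x y lam : ι → G) {m : ℕ} (hlam : ∀ i, lam i ∈ (⊤ : Subgroup G).lowerCentralSeries m)
    (hprod : (l.map fun i => ⁅y i, lam i⁆).prod ∈ (⊤ : Subgroup G).lowerCentralSeries (m + 2)) :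
    (l.map fun i => ⁅x i, y i⁆).prod⁻¹ *
        (l.map fun i => ⁅x i * lam i, (lam i)⁻¹ * y i * lam i⁆).prod ∈
      (⊤ : Subgroup G).lowerCentralSeries (m + 2) := by
  set N := (⊤ : Subgroup G).lowerCentralSeries (m + 2)
  set π := QuotientGroup.mk' N
  have hπ : ∀ g ∈ N, π g = 1 := fun g => (QuotientGroup.eq_one_iff g).mpr
  have hcomm : ∀ i, ⁅lam i, y i⁆ ∈ (⊤ : Subgroup G).lowerCentralSeries (m + 1) := fun i =>
    commutator_mem_commutator (hlam i) (mem_top _)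
  have hcentral : ∀ i z, Commute (π ⁅y i, lam i⁆) z := fun i =>
    QuotientGroup.commute_mk_of_mem_lowerCentralSeries
      (by rw [← commutatorElement_inv]; exact inv_mem (hcomm i))
  have hterm : ∀ i, π ⁅x i * lam i, (lam i)⁻¹ * y i * lam i⁆ * π ⁅y i, lam i⁆ = π ⁅x i, y i⁆ := by
    intro i
    have hid : ⁅x i * lam i, (lam i)⁻¹ * y i * lam i⁆ * ⁅y i, lam i⁆ =
        ⁅x i, y i⁆ * ⁅⁅lam i, y i⁆, (lam i)⁻¹⁆⁻¹ := by
      simp only [commutatorElement_def]; group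
    have hN : ⁅⁅lam i, y i⁆, (lam i)⁻¹⁆⁻¹ ∈ N :=
      inv_mem (commutator_mem_commutator (hcomm i) (mem_top _))
    rw [← map_mul, hid, map_mul, hπ _ hN, mul_one]
  rw [← QuotientGroup.eq]
  change π _ = π _
  rw [eq_comm, ← mul_one (π _), ← hπ _ hprod]
  simp only [map_list_prod, List.map_map, Function.comp_def]
  rw [← List.prod_map_mul_of_commute _ _ _ hcentral]
  simp only [hterm]

theorem FreeGroup.inv_mul_map_mem_of_forall_of {α : Type*} {N : Subgroup (FreeGroup α)} [N.Normal]
    (f : FreeGroup α →* FreeGroup α) (hf : ∀ x, (of x)⁻¹ * f (of x) ∈ N) (a : FreeGroup α) :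
    a⁻¹ * f a ∈ N := by
  have hcomp : (QuotientGroup.mk' N).comp f = QuotientGroup.mk' N :=
    FreeGroup.ext_hom _ _ fun x => (QuotientGroup.eq.mpr (hf x)).symm
  exact QuotientGroup.eq.mp (DFunLike.congr_fun hcomp a).symm

end LowerCentralSeries

theorem realization_for_massey_general (g n : ℕ) (hn : 2 ≤ n)
    (lam : Fin g → Fg g)
    (hlam : ∀ i, lam i ∈ (⊤ : Subgroup (Fg g)).lowerCentralSeries (n - 1))
    (hprod : ((List.finRange g).map fun i => ⁅Y g i, lam i⁆).prod ∈
      (⊤ : Subgroup (Fg g)).lowerCentralSeries (n + 1))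
    (h : Fg g →* Fg g)
    (hx : ∀ i, h (X g i) = X g i * lam i)
    (hy : ∀ i, h (Y g i) = (lam i)⁻¹ * Y g i * lam i) :
    -- `∏_i [h(x_i), h(y_i)] ≡ ω_g` modulo `F_{n+2}`
    (omegaG g)⁻¹ * ((List.finRange g).map fun i => ⁅h (X g i), h (Y g i)⁆).prod ∈
      (⊤ : Subgroup (Fg g)).lowerCentralSeries (n + 1) ∧
    -- `h` induces the identity automorphism of `F/F_n`
    (∀ a : Fg g, a⁻¹ * h a ∈ (⊤ : Subgroup (Fg g)).lowerCentralSeries (n - 1)) ∧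
    -- `h` induces an automorphism of `F/F_{n+1}` belonging to `A₀(F/F_{n+1})`
    ∃ ψ : MulAut (Q g (n + 1)),
      (∀ a : Fg g, ψ (mkQ g (n + 1) a) = mkQ g (n + 1) (h a)) ∧
      IsA0 g (n + 1) ψ := by
  have hidx : n - 1 + 2 = n + 1 := by omega
  have homega : (omegaG g)⁻¹ * ((List.finRange g).map fun i => ⁅h (X g i), h (Y g i)⁆).prod ∈
      (⊤ : Subgroup (Fg g)).lowerCentralSeries (n + 1) := by
    simp only [omegaG, hx, hy, ← hidx]
    exact inv_mul_prod_commutator_conj_mem_lowerCentralSeries _ _ _ _ hlam (hidx ▸ hprod)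
  have hid : ∀ a, a⁻¹ * h a ∈ (⊤ : Subgroup (Fg g)).lowerCentralSeries (n - 1) := by
    refine FreeGroup.inv_mul_map_mem_of_forall_of h ?_
    rintro ⟨i, _ | _⟩
    · change (X g i)⁻¹ * h (X g i) ∈ _
      rw [hx, inv_mul_cancel_left]
      exact hlam i
    · change (Y g i)⁻¹ * h (Y g i) ∈ _
      rw [hy, show (Y g i)⁻¹ * ((lam i)⁻¹ * Y g i * lam i) =
        (Y g i)⁻¹ * (lam i)⁻¹ * (Y g i)⁻¹⁻¹ * lam i by group]
      exact mul_mem (Normal.conj_mem inferInstance _ (inv_mem (hlam i)) _) (hlam i)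
  have hbij := bijective_map_lowerCentralSeries_of_inv_mul_mem h hid (m := n + 1 - 1) (by omega)
  refine ⟨homega, hid, MulEquiv.ofBijective _ hbij, fun a => rfl, h, fun a => rfl, ?_⟩
  simpa only [omegaG, map_list_prod, List.map_map, Function.comp_def, map_commutatorElement]
    using homega

/-- if `λ_i ∈ F_n` with `∏_i [y_i,λ_i] ∈ F_{n+2}`, then the endomorphism `h`
with `h(x_i) = x_i·λ_i`, `h(y_i) = λ_i⁻¹·y_i·λ_i` satisfies
`∏_i [h(x_i),h(y_i)] ≡ ω_g mod F_{n+2}`; consequently `h` induces the identity on `F/F_n`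
and induces an automorphism of `F/F_{n+1}` lying in `A₀(F/F_{n+1})`. -/
theorem realization_for_massey (g n : ℕ) (hg : 1 ≤ g) (hn : 2 ≤ n)
    (lam : Fin g → Fg g)
    (hlam : ∀ i, lam i ∈ (⊤ : Subgroup (Fg g)).lowerCentralSeries (n - 1))
    (hprod : ((List.finRange g).map fun i => ⁅Y g i, lam i⁆).prod ∈
      (⊤ : Subgroup (Fg g)).lowerCentralSeries (n + 1))
    (h : Fg g →* Fg g)
    (hx : ∀ i, h (X g i) = X g i * lam i)
    (hy : ∀ i, h (Y g i) = (lam i)⁻¹ * Y g i * lam i) :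
    -- `∏_i [h(x_i), h(y_i)] ≡ ω_g` modulo `F_{n+2}`
    (omegaG g)⁻¹ * ((List.finRange g).map fun i => ⁅h (X g i), h (Y g i)⁆).prod ∈
      (⊤ : Subgroup (Fg g)).lowerCentralSeries (n + 1) ∧
    -- `h` induces the identity automorphism of `F/F_n`
    (∀ a : Fg g, a⁻¹ * h a ∈ (⊤ : Subgroup (Fg g)).lowerCentralSeries (n - 1)) ∧
    -- `h` induces an automorphism of `F/F_{n+1}` belonging to `A₀(F/F_{n+1})`
    ∃ ψ : MulAut (Q g (n + 1)),
      (∀ a : Fg g, ψ (mkQ g (n + 1) a) = mkQ g (n + 1) (h a)) ∧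
      IsA0 g (n + 1) ψ :=
  realization_for_massey_general g n hn lam hlam hprod h hx hy
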